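/- For t ∈ [0,1), a probability measure q on a parameter space Θ, and a family of nonnegative measurable functions p_θ(x), the multi-sample risk R̂^m_t(q,x) := E_{θ_1,…,θ_m ∼ q^{⊗m}}[ -log_t( (1/m)∑_{j=1}^m p_{θ_j}(x) ) ] is an upper bound on the ensemble risk R_t(q,x) := -log_t( E_{θ∼q}[p_θ(x)] ), i.e., R_t(q,x) ≤ R̂^m_t(q,x). -/

import Mathlib

/-!
The `t`-logarithm is concave on `[0, ∞)` for `t ∈ [0, 1)`, so by Jensen's inequality
`E[log_t(g)] ≤ log_t(E[g])` for the sample mean `g = (1/m) ∑ⱼ p_{θⱼ}(x)` under `q^{⊗m}`;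
since every coordinate has law `q`, `E[g] = E_q[p_θ(x)]`.
-/

open MeasureTheory Set

namespace Real

noncomputable def tLog (t x : ℝ) : ℝ := (x ^ (1 - t) - 1) / (1 - t)

lemma rpow_le_one_add {p x : ℝ} (hx : 0 ≤ x) (hp₀ : 0 ≤ p) (hp₁ : p ≤ 1) : x ^ p ≤ 1 + x := by
  rcases le_total x 1 with h | h
  · linarith [rpow_le_one hx h hp₀]
  · linarith [rpow_le_self_of_one_le h hp₁]

lemma continuous_tLog {t : ℝ} (ht : t ≤ 1) : Continuous (tLog t) :=
  ((continuous_rpow_const (sub_nonneg.mpr ht)).sub continuous_const).div_const _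

lemma concaveOn_tLog {t : ℝ} (ht₀ : 0 ≤ t) (ht₁ : t < 1) : ConcaveOn ℝ (Ici 0) (tLog t) := by
  have hpow : ConcaveOn ℝ (Ici 0) fun x : ℝ ↦ x ^ (1 - t) - 1 :=
    (concaveOn_rpow (by linarith) (by linarith)).sub (convexOn_const 1 (convex_Ici 0))
  have htLog : tLog t = fun x ↦ (1 - t)⁻¹ • (x ^ (1 - t) - 1) := by
    ext x
    rw [tLog, smul_eq_mul, div_eq_inv_mul]
  rw [htLog]
  exact hpow.smul (inv_nonneg.mpr (by linarith))

end Real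

open Real

namespace MeasureTheory

variable {α : Type*} [MeasurableSpace α] {μ : Measure α} {g : α → ℝ}

lemma Integrable.rpow_of_le_one [IsFiniteMeasure μ] (hg : Integrable g μ) (hg₀ : ∀ x, 0 ≤ g x)
    {p : ℝ} (hp₀ : 0 ≤ p) (hp₁ : p ≤ 1) : Integrable (fun x ↦ g x ^ p) μ := by
  refine ((integrable_const 1).add hg).mono ?_ (ae_of_all _ fun x ↦ ?_)
  · exact (continuous_rpow_const hp₀).comp_aestronglyMeasurable hg.1
  · rw [norm_of_nonneg (rpow_nonneg (hg₀ x) p), Pi.add_apply, norm_of_nonneg (by linarith [hg₀ x])]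
    exact rpow_le_one_add (hg₀ x) hp₀ hp₁

lemma Integrable.tLog [IsFiniteMeasure μ] (hg : Integrable g μ) (hg₀ : ∀ x, 0 ≤ g x) {t : ℝ}
    (ht₀ : 0 ≤ t) (ht₁ : t ≤ 1) : Integrable (fun x ↦ tLog t (g x)) μ :=
  ((hg.rpow_of_le_one hg₀ (by linarith) (by linarith)).sub (integrable_const 1)).div_const _

lemma integral_tLog_le_tLog_integral [IsProbabilityMeasure μ] (hg : Integrable g μ)
    (hg₀ : ∀ x, 0 ≤ g x) {t : ℝ} (ht₀ : 0 ≤ t) (ht₁ : t < 1) :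
    ∫ x, tLog t (g x) ∂μ ≤ tLog t (∫ x, g x ∂μ) :=
  (concaveOn_tLog ht₀ ht₁).le_map_integral (continuous_tLog ht₁.le).continuousOn isClosed_Ici
    (ae_of_all _ hg₀) hg (hg.tLog hg₀ ht₀ ht₁.le)

lemma integral_sum_eval_div_card_pi {ι : Type*} [Fintype ι] [Nonempty ι]
    [IsProbabilityMeasure μ] (hg : Integrable g μ) :
    ∫ xs, (∑ i, g (xs i)) / Fintype.card ι ∂(Measure.pi fun _ : ι ↦ μ) = ∫ x, g x ∂μ := by
  rw [integral_div, integral_finsetSum _ fun i _ ↦ integrable_comp_eval hg]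
  simp only [integral_comp_eval (μ := fun _ ↦ μ) hg.1, Finset.sum_const, Finset.card_univ,
    nsmul_eq_mul]
  field_simp

end MeasureTheory

theorem ensemble_risk_le_multisample_risk_general
    {Θ : Type*} [MeasurableSpace Θ] (q : Measure Θ) [IsProbabilityMeasure q]
    (f : Θ → ℝ) (hf_nonneg : ∀ θ, 0 ≤ f θ)
    (hf_int : Integrable f q)
    (t : ℝ) (ht : t ∈ Set.Ico (0:ℝ) 1) (m : ℕ) (hm : 0 < m) :
    -(((∫ θ, f θ ∂q) ^ (1 - t) - 1) / (1 - t))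
      ≤ ∫ θs, -((((∑ j, f (θs j)) / (m : ℝ)) ^ (1 - t) - 1) / (1 - t))
          ∂(Measure.pi fun _ : Fin m => q) := by
  have : NeZero m := ⟨hm.ne'⟩
  have hmean := integral_sum_eval_div_card_pi (ι := Fin m) hf_int
  rw [Fintype.card_fin] at hmean
  have hmean_int : Integrable (fun θs : Fin m → Θ ↦ (∑ j, f (θs j)) / m)
      (Measure.pi fun _ ↦ q) :=
    (integrable_finsetSum _ fun j _ ↦ integrable_comp_eval hf_int).div_const _
  have hjensen := integral_tLog_le_tLog_integral hmean_int
    (fun θs ↦ div_nonneg (Finset.sum_nonneg fun j _ ↦ hf_nonneg _) m.cast_nonneg) ht.1 ht.2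
  rw [hmean] at hjensen
  rw [integral_neg]
  exact neg_le_neg hjensen

/-- The multi-sample t-log risk upper bounds the ensemble t-log risk:
`-log_t (E_{θ∼q}[p_θ(x)]) ≤ E_{θ_1,…,θ_m ∼ q^{⊗m}}[-log_t((1/m)∑_j p_{θ_j}(x))]`
for `t ∈ [0,1)`. Here `f θ = p_θ(x)` for the fixed data point `x`. -/
theorem ensemble_risk_le_multisample_risk
    {Θ : Type*} [MeasurableSpace Θ] (q : Measure Θ) [IsProbabilityMeasure q]
    (f : Θ → ℝ) (hf_meas : Measurable f) (hf_nonneg : ∀ θ, 0 ≤ f θ)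
    (hf_int : Integrable f q)
    (t : ℝ) (ht : t ∈ Set.Ico (0:ℝ) 1) (m : ℕ) (hm : 0 < m) :
    -(((∫ θ, f θ ∂q) ^ (1 - t) - 1) / (1 - t))
      ≤ ∫ θs, -((((∑ j, f (θs j)) / (m : ℝ)) ^ (1 - t) - 1) / (1 - t))
          ∂(Measure.pi fun _ : Fin m => q) :=
  ensemble_risk_le_multisample_risk_general q f hf_nonneg hf_int t ht m hm
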